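/- arXiv:2310.08831 — 7 statements merged into one kernel-verified Lean document; each statement's English description precedes it below -/
import Mathlib

section
/- Let S be a symmetric positive definite d×d real matrix such that every off-diagonal entry of S^{-1} is nonpositive, and let Σ_E = diag(a_1,…,a_d) with a_j ≥ 0 for all j. Then Σ_E + S is invertible, and the matrix Ω = (Σ_E + S)^{-1} satisfies: Ω_{jj} > 0 and a_j·Ω_{jj} ≤ 1 for every j ∈ {1,…,d}, and Ω_{jj'} ≤ 0 for all j ≠ j'. -/
/-!
Adding a nonnegative diagonal to the positive definite `S` keeps it positive definite, so
`Ω = (Σ_E + S)⁻¹` exists and has positive diagonal. Writing `Σ_E` as a sum of rank-one updates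
`a_k e_k e_kᵀ`, the Sherman–Morrison formula changes the inverse `M` by `-c M e_k e_kᵀ M` with
`0 ≤ c` and `c M_kk < 1`, which keeps the off-diagonal entries nonpositive. Finally, for the
`j`-th column `u` of `Ω` one has `Ω_jj = uᵀ (Σ_E + S) u ≥ a_j u_j² = a_j Ω_jj²`.
-/

open Matrix

namespace Matrix

def IsZMatrix {n R : Type*} [Zero R] [LE R] (M : Matrix n n R) : Prop :=
  ∀ i j, i ≠ j → M i j ≤ 0

variable {n : Type*} [Fintype n] [DecidableEq n]

theorem inv_diagonal_single_add_apply {K : Type*} [Field K] {T : Matrix n n K} (hT : IsUnit T)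
    (k : n) {b : K} (hb : 1 + b * T⁻¹ k k ≠ 0) (i j : n) :
    (diagonal (Pi.single k b) + T)⁻¹ i j
      = T⁻¹ i j - b / (1 + b * T⁻¹ k k) * (T⁻¹ i k * T⁻¹ k j) := by
  set M := T⁻¹
  set c := b / (1 + b * M k k)
  set E : Matrix n n K := single k k 1
  have hD : diagonal (Pi.single k b) = b • E := by
    rw [diagonal_single, smul_single, smul_eq_mul, mul_one]
  have hTM : T * M = 1 := mul_nonsing_inv T ((isUnit_iff_isUnit_det T).1 hT)
  have hEME : E * M * E = M k k • E := by simp [E, smul_single]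
  have hc : b - c * (b * M k k) - c = 0 := by
    simp only [c]; field_simp; ring
  suffices h : (b • E + T) * (M - c • (M * E * M)) = 1 by
    rw [hD, inv_eq_right_inv h]
    simp [E, mul_apply, single, ite_and]
  calc (b • E + T) * (M - c • (M * E * M))
      = b • (E * M) - (c * b) • (E * M * E * M) + T * M - c • (T * M * E * M) := by
        simp only [add_mul, mul_sub, Matrix.mul_smul, Matrix.smul_mul, smul_smul, mul_assoc]; abel
    _ = 1 + (b - c * (b * M k k) - c) • (E * M) := by
        rw [hEME, hTM, one_mul, Matrix.smul_mul]; module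
    _ = 1 := by rw [hc, zero_smul, add_zero]

theorem IsZMatrix.inv_diagonal_single_add {T : Matrix n n ℝ} (hT : T.PosDef)
    (hZ : IsZMatrix T⁻¹) (k : n) {b : ℝ} (hb : 0 ≤ b) :
    IsZMatrix (diagonal (Pi.single k b) + T)⁻¹ := by
  intro i j hij
  set M := T⁻¹
  have hMkk : 0 < M k k := hT.inv.diag_pos
  have hden : 0 < 1 + b * M k k := by positivity
  rw [inv_diagonal_single_add_apply hT.isUnit k hden.ne']
  set c := b / (1 + b * M k k)
  have hc : 0 ≤ c := by positivity
  have hcM : c * M k k ≤ 1 := by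
    rw [div_mul_eq_mul_div, div_le_one hden]; linarith
  rcases eq_or_ne i k with rfl | hik
  · nlinarith [hZ i j hij]
  rcases eq_or_ne j k with rfl | hjk
  · nlinarith [hZ i j hij]
  · have hMikj : 0 ≤ M i k * M k j :=
      mul_nonneg_of_nonpos_of_nonpos (hZ i k hik) (hZ k j hjk.symm)
    nlinarith [hZ i j hij, mul_nonneg hc hMikj]

theorem IsZMatrix.inv_diagonal_add {S : Matrix n n ℝ} (hS : S.PosDef) (hZ : IsZMatrix S⁻¹)
    {a : n → ℝ} (ha : 0 ≤ a) : IsZMatrix (diagonal a + S)⁻¹ := by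
  suffices h : ∀ s : Finset n, (diagonal (∑ k ∈ s, Pi.single k (a k)) + S).PosDef ∧
      IsZMatrix (diagonal (∑ k ∈ s, Pi.single k (a k)) + S)⁻¹ by
    simpa only [Finset.univ_sum_single] using (h Finset.univ).2
  intro s
  induction s using Finset.induction_on with
  | empty => simpa using ⟨hS, hZ⟩
  | insert k s hk ih =>
    rw [Finset.sum_insert hk, show diagonal (Pi.single k (a k) + ∑ k ∈ s, Pi.single k (a k))
      = diagonal (Pi.single k (a k)) + diagonal (∑ k ∈ s, Pi.single k (a k)) from
      (diagonal_add _ _).symm, add_assoc]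
    have hE : (diagonal (Pi.single k (a k))).PosSemidef := .diagonal (Pi.single_nonneg.2 (ha k))
    exact ⟨.posSemidef_add hE ih.1, ih.2.inv_diagonal_single_add ih.1 k (ha k)⟩

theorem inv_apply_self_eq_dotProduct_mulVec {K : Type*} [Field K] {N : Matrix n n K}
    (hN : IsUnit N) (j : n) :
    N⁻¹ j j = (N⁻¹ *ᵥ Pi.single j 1) ⬝ᵥ (N *ᵥ (N⁻¹ *ᵥ Pi.single j 1)) := by
  rw [mulVec_mulVec, mul_nonsing_inv N ((isUnit_iff_isUnit_det N).1 hN), one_mulVec,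
    dotProduct_single, mul_one]
  simp

theorem mul_sq_le_dotProduct_diagonal_mulVec {a : n → ℝ} (ha : 0 ≤ a) (u : n → ℝ) (j : n) :
    a j * u j ^ 2 ≤ u ⬝ᵥ (diagonal a *ᵥ u) := by
  simp only [dotProduct, mulVec_diagonal]
  calc a j * u j ^ 2 = u j * (a j * u j) := by ring
    _ ≤ ∑ i, u i * (a i * u i) :=
      Finset.single_le_sum (f := fun i => u i * (a i * u i))
        (fun i _ => by rw [mul_left_comm]; exact mul_nonneg (ha i) (mul_self_nonneg _))
        (Finset.mem_univ j)

theorem PosSemidef.mul_inv_diagonal_add_apply_le_one {S : Matrix n n ℝ} (hS : S.PosSemidef)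
    {a : n → ℝ} (ha : 0 ≤ a) (hN : IsUnit (diagonal a + S)) (j : n) :
    a j * (diagonal a + S)⁻¹ j j ≤ 1 := by
  set N := diagonal a + S
  set u := N⁻¹ *ᵥ Pi.single j 1
  have huj : u j = N⁻¹ j j := by simp [u]
  have key : a j * N⁻¹ j j ^ 2 ≤ N⁻¹ j j :=
    calc a j * N⁻¹ j j ^ 2 = a j * u j ^ 2 := by rw [huj]
      _ ≤ u ⬝ᵥ (diagonal a *ᵥ u) := mul_sq_le_dotProduct_diagonal_mulVec ha u j
      _ ≤ u ⬝ᵥ (diagonal a *ᵥ u) + u ⬝ᵥ (S *ᵥ u) :=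
        le_add_of_nonneg_right (by simpa using hS.dotProduct_mulVec_nonneg u)
      _ = N⁻¹ j j := by rw [← dotProduct_add, ← add_mulVec, inv_apply_self_eq_dotProduct_mulVec hN]
  have hNjj : 0 ≤ N⁻¹ j j := ((PosSemidef.diagonal ha).add hS).inv.diag_nonneg
  rcases hNjj.eq_or_lt with h0 | hpos
  · rw [← h0, mul_zero]; exact zero_le_one
  · nlinarith

end Matrix

/-- If `S` is symmetric positive definite with the off-diagonal
entries of `S⁻¹` nonpositive, and `Σ_E = diagonal a` with `a j ≥ 0`, then
`Σ_E + S` is invertible and `Ω = (Σ_E + S)⁻¹` has strictly positive diagonal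
entries satisfying `a j * Ω j j ≤ 1`, and nonpositive off-diagonal entries. -/
theorem measurement_error_Omega_signs
    (d : ℕ) (S : Matrix (Fin d) (Fin d) ℝ) (hS : S.PosDef)
    (hSinv : ∀ j j' : Fin d, j ≠ j' → S⁻¹ j j' ≤ 0)
    (a : Fin d → ℝ) (ha : ∀ j, 0 ≤ a j) :
    IsUnit (Matrix.diagonal a + S) ∧
    (∀ j, 0 < (Matrix.diagonal a + S)⁻¹ j j) ∧
    (∀ j, a j * (Matrix.diagonal a + S)⁻¹ j j ≤ 1) ∧
    (∀ j j', j ≠ j' → (Matrix.diagonal a + S)⁻¹ j j' ≤ 0) := by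
  replace ha : 0 ≤ a := ha
  have hN : (diagonal a + S).PosDef := .posSemidef_add (.diagonal ha) hS
  exact ⟨hN.isUnit, fun j => hN.inv.diag_pos,
    hS.posSemidef.mul_inv_diagonal_add_apply_le_one ha hN.isUnit,
    IsZMatrix.inv_diagonal_add hS hSinv ha⟩
end

section
/- Let A be a symmetric positive definite p×p real matrix, C a real p×d matrix, and D, Σ_E real d×d matrices such that the (p+d)×(p+d) block matrix Σ_M with blocks A, C (upper-right), C^T (lower-left), and Σ_E + D (lower-right) is symmetric positive definite. Then Σ_E + D − C^T A^{-1} C is invertible, and for every β_Z ∈ R^p and β_X ∈ R^d, the last d entries of the vector Σ_M^{-1} · E · (β_Z, β_X), where E is the (p+d)×(p+d) block matrix with zero blocks except for −Σ_E in the lower-right d×d block, equal −(Σ_E + D − C^T A^{-1} C)^{-1} Σ_E β_X. -/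
open Matrix

/-!
The upper-left block `A` of the positive definite matrix `Σ_M` is itself positive definite, hence
invertible, and the Schur complement `Ω⁻¹ = Σ_E + D - Cᵀ A⁻¹ C` is invertible because `Σ_M` is.
Blockwise inversion shows that the lower-right block of `Σ_M⁻¹` is `Ω`; since `E β = (0, -Σ_E β_X)`,
only that block contributes to the last `d` entries of `Σ_M⁻¹ E β`.
-/

namespace Matrix

variable {l m n α : Type*}

theorem PosDef.toBlocks₁₁ [Ring α] [PartialOrder α] [StarRing α]
    {M : Matrix (m ⊕ n) (m ⊕ n) α} (hM : M.PosDef) : M.toBlocks₁₁.PosDef :=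
  hM.submatrix Sum.inl_injective

variable [Fintype m] [Fintype n]

theorem mulVec_sumElim_zero_inr [NonUnitalNonAssocSemiring α] (M : Matrix (l ⊕ n) (m ⊕ n) α)
    (v : n → α) (i : n) : (M *ᵥ Sum.elim 0 v) (Sum.inr i) = (M.toBlocks₂₂ *ᵥ v) i := by
  simp [mulVec, dotProduct, Fintype.sum_sum_type, toBlocks₂₂]

variable [DecidableEq m] [DecidableEq n] [CommRing α]
  {A : Matrix m m α} {B : Matrix m n α} {C : Matrix n m α} {D : Matrix n n α}

theorem isUnit_fromBlocks_iff_of_isUnit₁₁ (hA : IsUnit A) :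
    IsUnit (fromBlocks A B C D) ↔ IsUnit (D - C * A⁻¹ * B) := by
  let := hA.invertible
  rw [isUnit_fromBlocks_iff_of_invertible₁₁, invOf_eq_nonsing_inv]

theorem toBlocks₂₂_inv_fromBlocks (hA : IsUnit A) (hM : IsUnit (fromBlocks A B C D)) :
    (fromBlocks A B C D)⁻¹.toBlocks₂₂ = (D - C * A⁻¹ * B)⁻¹ := by
  let := hA.invertible
  let := hM.invertible
  let := invertibleOfFromBlocks₁₁Invertible A B C D
  rw [← invOf_eq_nonsing_inv, invOf_fromBlocks₁₁_eq, toBlocks_fromBlocks₂₂, invOf_eq_nonsing_inv,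
    invOf_eq_nonsing_inv]

end Matrix

/-- For a symmetric positive definite block matrix
`Σ_M = [[A, C], [Cᵀ, SE + D]]` (with `SE` playing the role of `Σ_E`), the Schur
complement `SE + D - Cᵀ A⁻¹ C` is invertible, and the last `d` entries of
`Σ_M⁻¹ E β` (with `E` the block matrix whose only nonzero block is the
lower-right block `-SE`) equal `-(SE + D - Cᵀ A⁻¹ C)⁻¹ SE βX`. -/
theorem measurement_error_bias_closed_form
    (p d : ℕ) (A : Matrix (Fin p) (Fin p) ℝ)
    (C : Matrix (Fin p) (Fin d) ℝ) (D SE : Matrix (Fin d) (Fin d) ℝ)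
    (hSM : (Matrix.fromBlocks A C Cᵀ (SE + D)).PosDef) :
    IsUnit (SE + D - Cᵀ * A⁻¹ * C) ∧
    ∀ (βZ : Fin p → ℝ) (βX : Fin d → ℝ) (j : Fin d),
      ((Matrix.fromBlocks A C Cᵀ (SE + D))⁻¹).mulVec
          ((Matrix.fromBlocks (0 : Matrix (Fin p) (Fin p) ℝ)
              (0 : Matrix (Fin p) (Fin d) ℝ) (0 : Matrix (Fin d) (Fin p) ℝ)
              (-SE)).mulVec (Sum.elim βZ βX)) (Sum.inr j)
        = (-(((SE + D - Cᵀ * A⁻¹ * C)⁻¹ * SE).mulVec βX)) j := by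
  have hA : IsUnit A := by simpa using hSM.toBlocks₁₁.isUnit
  refine ⟨(isUnit_fromBlocks_iff_of_isUnit₁₁ hA).1 hSM.isUnit, fun βZ βX j => ?_⟩
  have hE : fromBlocks (0 : Matrix (Fin p) (Fin p) ℝ) 0 0 (-SE) *ᵥ Sum.elim βZ βX =
      Sum.elim (0 : Fin p → ℝ) (-(SE *ᵥ βX)) := by
    simp [fromBlocks_mulVec, neg_mulVec]
  rw [hE, mulVec_sumElim_zero_inr, toBlocks₂₂_inv_fromBlocks hA hSM.isUnit, mulVec_neg,
    mulVec_mulVec]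
end

section
/- Let p ≥ 1 and d = 1. Let A be a symmetric positive definite p×p real matrix, B ∈ R^p, σ_X > 0, σ_W > 0, ρ ∈ [−1, 1], and β_X ∈ R. Define C = (σ_W ρ / σ_X) B ∈ R^p, F = σ_X σ_W ρ, G = σ_W². Assume σ_X² − B^T A^{-1} B > 0. Then A − C G^{-1} C^T is invertible and the measurement error bias (A − C G^{-1} C^T)^{-1}(B − C G^{-1} F) β_X equals ϱ · A^{-1} B β_X, where ϱ = 1 if ρ = 0 and ϱ = (1 − ρ²)·(1 + (B^T A^{-1} B)/(σ_X²/ρ² − B^T A^{-1} B)) otherwise; moreover ϱ ∈ [0, 1) whenever ρ ≠ 0. In particular the measurement error bias of the coefficient of Z has the same sign, entrywise, as the omitted variable bias A^{-1} B β_X, and is entrywise no larger in absolute value. -/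
/-!
Because `W` is uncorrelated with `Z` given `X`, `C` is proportional to `B`: the corrected matrix
`A - C G⁻¹ Cᵀ` is the rank-one update `A - (ρ² / σX²) B Bᵀ` and `B - C G⁻¹ F = (1 - ρ²) B`.
A rank-one update `A - t B Bᵀ` maps `A⁻¹ B` to `(1 - t BᵀA⁻¹B) B` (Sherman–Morrison), so the
measurement error bias is the scalar multiple `(1 - ρ²) / (1 - ρ² BᵀA⁻¹B / σX²)` of the omitted
variable bias, and `0 ≤ BᵀA⁻¹B < σX²` puts this factor in `[0, 1]`.
-/

open Matrix

namespace Matrix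

variable {n K : Type*} [Fintype n] [DecidableEq n] [Field K]

theorem det_sub_smul_vecMulVec {A : Matrix n n K} (hA : IsUnit A.det) (t : K) (u v : n → K) :
    (A - t • vecMulVec u v).det = A.det * (1 - t * (v ⬝ᵥ A⁻¹ *ᵥ u)) := by
  have hrank_one : A - t • vecMulVec u v
      = A + replicateCol Unit (-t • u) * replicateRow Unit v := by
    rw [← vecMulVec_eq, sub_eq_add_neg, ← neg_smul, smul_vecMulVec]
  rw [hrank_one, det_add_replicateCol_mul_replicateRow hA, det_unique (n := Unit),
    Matrix.mul_assoc, ← replicateCol_mulVec, add_apply, one_apply_eq,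
    replicateRow_mul_replicateCol_apply, mulVec_smul, dotProduct_smul, smul_eq_mul, neg_mul,
    ← sub_eq_add_neg]

theorem isUnit_det_sub_smul_vecMulVec {A : Matrix n n K} (hA : IsUnit A.det) {t : K}
    {u v : n → K} (h : 1 - t * (v ⬝ᵥ A⁻¹ *ᵥ u) ≠ 0) : IsUnit (A - t • vecMulVec u v).det := by
  rw [det_sub_smul_vecMulVec hA]
  exact hA.mul h.isUnit

theorem mulVec_sub_smul_vecMulVec_inv_mulVec {A : Matrix n n K} (hA : IsUnit A.det)
    (t : K) (u v : n → K) :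
    (A - t • vecMulVec u v) *ᵥ (A⁻¹ *ᵥ u) = (1 - t * (v ⬝ᵥ A⁻¹ *ᵥ u)) • u := by
  rw [sub_mulVec, mulVec_mulVec, mul_nonsing_inv A hA, one_mulVec, smul_mulVec,
    vecMulVec_mulVec, op_smul_eq_smul, smul_smul, sub_smul, one_smul]

theorem inv_sub_smul_vecMulVec_mulVec {A : Matrix n n K} (hA : IsUnit A.det) {t : K}
    {u v : n → K} (h : 1 - t * (v ⬝ᵥ A⁻¹ *ᵥ u) ≠ 0) :
    (A - t • vecMulVec u v)⁻¹ *ᵥ u = (1 - t * (v ⬝ᵥ A⁻¹ *ᵥ u))⁻¹ • A⁻¹ *ᵥ u := by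
  calc (A - t • vecMulVec u v)⁻¹ *ᵥ u
      = (A - t • vecMulVec u v)⁻¹ *ᵥ ((1 - t * (v ⬝ᵥ A⁻¹ *ᵥ u))⁻¹ •
          (A - t • vecMulVec u v) *ᵥ (A⁻¹ *ᵥ u)) := by
        rw [mulVec_sub_smul_vecMulVec_inv_mulVec hA, smul_smul, inv_mul_cancel₀ h, one_smul]
    _ = (1 - t * (v ⬝ᵥ A⁻¹ *ᵥ u))⁻¹ • A⁻¹ *ᵥ u := by
        rw [mulVec_smul, mulVec_mulVec, nonsing_inv_mul _ (isUnit_det_sub_smul_vecMulVec hA h),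
          one_mulVec]

end Matrix

/-- The factor `ϱ` of the paper, in a form that needs no case split at `ρ = 0`. -/
noncomputable def attenuation (ρ σ s : ℝ) : ℝ := (1 - ρ ^ 2) / (1 - ρ ^ 2 / σ ^ 2 * s)

section attenuation

variable {ρ σ s : ℝ}

theorem ite_eq_attenuation (hσ : σ ≠ 0) (hden : 1 - ρ ^ 2 / σ ^ 2 * s ≠ 0) :
    (if ρ = 0 then 1 else (1 - ρ ^ 2) * (1 + s / (σ ^ 2 / ρ ^ 2 - s))) = attenuation ρ σ s := by
  split_ifs with hρ
  · simp [attenuation, hρ]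
  · have hσρ : σ ^ 2 - ρ ^ 2 * s ≠ 0 := fun h => hden (by field_simp; linear_combination h)
    have hσρ' : σ ^ 2 / ρ ^ 2 - s ≠ 0 := by
      rw [div_sub' (pow_ne_zero 2 hρ), div_ne_zero_iff]
      exact ⟨hσρ, pow_ne_zero 2 hρ⟩
    unfold attenuation
    field_simp
    ring

theorem one_sub_sq_div_sq_mul_pos (hρ : ρ ^ 2 ≤ 1) (hs : 0 ≤ s) (hsσ : s < σ ^ 2) :
    0 < 1 - ρ ^ 2 / σ ^ 2 * s := by
  have hσ : 0 < σ ^ 2 := hs.trans_lt hsσ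
  rw [sub_pos, div_mul_eq_mul_div, div_lt_one hσ]
  nlinarith

theorem attenuation_nonneg (hρ : ρ ^ 2 ≤ 1) (hden : 0 < 1 - ρ ^ 2 / σ ^ 2 * s) :
    0 ≤ attenuation ρ σ s :=
  div_nonneg (sub_nonneg.2 hρ) hden.le

theorem attenuation_le_one (hsσ : s < σ ^ 2) (hden : 0 < 1 - ρ ^ 2 / σ ^ 2 * s) :
    attenuation ρ σ s ≤ 1 := by
  have hsσ' : s / σ ^ 2 ≤ 1 := div_le_one_of_le₀ hsσ.le (sq_nonneg σ)
  rw [attenuation, div_le_one hden, mul_comm_div]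
  nlinarith [sq_nonneg ρ]

theorem attenuation_lt_one (hρ : ρ ≠ 0) (hsσ : s < σ ^ 2) (hden : 0 < 1 - ρ ^ 2 / σ ^ 2 * s) :
    attenuation ρ σ s < 1 := by
  have hsσ' : s / σ ^ 2 < 1 := by
    rcases (sq_nonneg σ).eq_or_lt with hσ | hσ
    · simp [← hσ]
    · exact (div_lt_one hσ).2 hsσ
  rw [attenuation, div_lt_one hden, mul_comm_div]
  nlinarith [sq_pos_of_ne_zero hρ]

end attenuation

theorem mul_mul_self_nonneg_of_nonneg {k : ℝ} (hk : 0 ≤ k) (x : ℝ) : 0 ≤ k * x * x := by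
  rw [mul_assoc]
  exact mul_nonneg hk (mul_self_nonneg x)

theorem abs_mul_le_abs_of_mem_Icc {k : ℝ} (hk : k ∈ Set.Icc 0 1) (x : ℝ) : |k * x| ≤ |x| := by
  rw [abs_mul, abs_of_nonneg hk.1]
  exact mul_le_of_le_one_left (abs_nonneg x) hk.2

theorem meb_vs_ovb_single_error_prone_general
    (p : ℕ)
    (A : Matrix (Fin p) (Fin p) ℝ) (hA : A.PosDef)
    (B : Fin p → ℝ) (σX σW ρ βX : ℝ)
    (hσX : 0 < σX) (hσW : 0 < σW) (hρ : ρ ∈ Set.Icc (-1 : ℝ) 1)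
    (C : Fin p → ℝ) (hC : C = fun i => σW * ρ / σX * B i)
    (F : ℝ) (hF : F = σX * σW * ρ)
    (G : ℝ) (hG : G = σW ^ 2)
    (hpd : 0 < σX ^ 2 - B ⬝ᵥ A⁻¹.mulVec B)
    (ϱ : ℝ)
    (hϱ : ϱ = if ρ = 0 then 1 else
      (1 - ρ ^ 2) * (1 + (B ⬝ᵥ A⁻¹.mulVec B) /
        (σX ^ 2 / ρ ^ 2 - B ⬝ᵥ A⁻¹.mulVec B))) :
    IsUnit (A - (1 / G) • Matrix.vecMulVec C C) ∧
    ((A - (1 / G) • Matrix.vecMulVec C C)⁻¹.mulVec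
        (fun i => (B i - C i * (1 / G) * F) * βX)
      = fun i => ϱ * (A⁻¹.mulVec B i * βX)) ∧
    (ρ ≠ 0 → ϱ ∈ Set.Ico (0 : ℝ) 1) ∧
    (∀ i,
      0 ≤ (A - (1 / G) • Matrix.vecMulVec C C)⁻¹.mulVec
            (fun i' => (B i' - C i' * (1 / G) * F) * βX) i
          * (A⁻¹.mulVec B i * βX) ∧
      |(A - (1 / G) • Matrix.vecMulVec C C)⁻¹.mulVec
          (fun i' => (B i' - C i' * (1 / G) * F) * βX) i|
        ≤ |A⁻¹.mulVec B i * βX|) := by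
  set s := B ⬝ᵥ A⁻¹ *ᵥ B
  have hρ2 : ρ ^ 2 ≤ 1 := sq_le_one_iff_abs_le_one ρ |>.2 (abs_le.2 hρ)
  have hs : 0 ≤ s := by simpa using hA.inv.posSemidef.dotProduct_mulVec_nonneg B
  have hsσ : s < σX ^ 2 := sub_pos.1 hpd
  have hden := one_sub_sq_div_sq_mul_pos hρ2 hs hsσ
  have hAdet : IsUnit A.det := (isUnit_iff_isUnit_det A).1 hA.isUnit
  have hϱ_eq : ϱ = attenuation ρ σX s := hϱ.trans (ite_eq_attenuation hσX.ne' hden.ne')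
  have hCC : (1 / G) • vecMulVec C C = (ρ ^ 2 / σX ^ 2) • vecMulVec B B := by
    ext i j
    simp only [hC, hG, Matrix.smul_apply, vecMulVec_apply, smul_eq_mul]
    field_simp
  have hvec : (fun i => (B i - C i * (1 / G) * F) * βX) = ((1 - ρ ^ 2) * βX) • B := by
    ext i
    simp only [hC, hG, hF, Pi.smul_apply, smul_eq_mul]
    field_simp
  have hbias : (A - (1 / G) • vecMulVec C C)⁻¹ *ᵥ (fun i => (B i - C i * (1 / G) * F) * βX)
      = fun i => ϱ * ((A⁻¹ *ᵥ B) i * βX) := by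
    rw [hCC, hvec, mulVec_smul, inv_sub_smul_vecMulVec_mulVec hAdet hden.ne', smul_smul, hϱ_eq]
    ext i
    simp only [attenuation, Pi.smul_apply, smul_eq_mul]
    ring
  have hϱ0 : 0 ≤ ϱ := hϱ_eq ▸ attenuation_nonneg hρ2 hden
  have hϱ1 : ϱ ≤ 1 := hϱ_eq ▸ attenuation_le_one hsσ hden
  refine ⟨?_, hbias, fun hρ0 => ⟨hϱ0, hϱ_eq ▸ attenuation_lt_one hρ0 hsσ hden⟩, fun i => ?_⟩
  · rw [hCC, isUnit_iff_isUnit_det]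
    exact isUnit_det_sub_smul_vecMulVec hAdet hden.ne'
  · rw [hbias]
    exact ⟨mul_mul_self_nonneg_of_nonneg hϱ0 _, abs_mul_le_abs_of_mem_Icc ⟨hϱ0, hϱ1⟩ _⟩

/-- Case `d = 1` with zero partial correlation of `W` and `Z`
given `X`: with `C = (σW ρ / σX) B`, `F = σX σW ρ`, `G = σW²`, the measurement
error bias equals `ϱ · A⁻¹ B βX` with `ϱ = 1` if `ρ = 0` and
`ϱ = (1 - ρ²)(1 + (BᵀA⁻¹B)/(σX²/ρ² - BᵀA⁻¹B)) ∈ [0, 1)` otherwise; in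
particular it has the same sign entrywise as the omitted variable bias
`A⁻¹ B βX` and is entrywise no larger in absolute value. -/
theorem meb_vs_ovb_single_error_prone
    (p : ℕ) (hp : 1 ≤ p)
    (A : Matrix (Fin p) (Fin p) ℝ) (hA : A.PosDef)
    (B : Fin p → ℝ) (σX σW ρ βX : ℝ)
    (hσX : 0 < σX) (hσW : 0 < σW) (hρ : ρ ∈ Set.Icc (-1 : ℝ) 1)
    (C : Fin p → ℝ) (hC : C = fun i => σW * ρ / σX * B i)
    (F : ℝ) (hF : F = σX * σW * ρ)
    (G : ℝ) (hG : G = σW ^ 2)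
    (hpd : 0 < σX ^ 2 - B ⬝ᵥ A⁻¹.mulVec B)
    (ϱ : ℝ)
    (hϱ : ϱ = if ρ = 0 then 1 else
      (1 - ρ ^ 2) * (1 + (B ⬝ᵥ A⁻¹.mulVec B) /
        (σX ^ 2 / ρ ^ 2 - B ⬝ᵥ A⁻¹.mulVec B))) :
    IsUnit (A - (1 / G) • Matrix.vecMulVec C C) ∧
    ((A - (1 / G) • Matrix.vecMulVec C C)⁻¹.mulVec
        (fun i => (B i - C i * (1 / G) * F) * βX)
      = fun i => ϱ * (A⁻¹.mulVec B i * βX)) ∧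
    (ρ ≠ 0 → ϱ ∈ Set.Ico (0 : ℝ) 1) ∧
    (∀ i,
      0 ≤ (A - (1 / G) • Matrix.vecMulVec C C)⁻¹.mulVec
            (fun i' => (B i' - C i' * (1 / G) * F) * βX) i
          * (A⁻¹.mulVec B i * βX) ∧
      |(A - (1 / G) • Matrix.vecMulVec C C)⁻¹.mulVec
          (fun i' => (B i' - C i' * (1 / G) * F) * βX) i|
        ≤ |A⁻¹.mulVec B i * βX|) :=
  meb_vs_ovb_single_error_prone_general p A hA B σX σW ρ βX hσX hσW hρ C hC F hF G hG hpd ϱ hϱ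
end

section
/- Let the (p+d)×(p+d) block matrix with blocks A (p×p), B (upper-right p×d), B^T, and D (d×d) be symmetric positive definite, and fix β_X ∈ R^d. Then for every symmetric positive semidefinite d×d matrix Σ_E, the matrices D + Σ_E and A − B (D + Σ_E)^{-1} B^T are invertible; and for every sequence (Σ_E^{(n)}) of symmetric positive semidefinite d×d matrices whose smallest eigenvalues tend to +∞, the measurement error bias vectors (A − B (D + Σ_E^{(n)})^{-1} B^T)^{-1} (B − B (D + Σ_E^{(n)})^{-1} D) β_X converge to the omitted variable bias vector A^{-1} B β_X. -/
/-!
Write `P = (D + Σ_E)⁻¹`. The measurement error bias is a function of `P` that is continuous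
at `P = 0`, where it equals the omitted variable bias `A⁻¹ B β_X` (`A` is invertible as a
principal block of the positive definite joint covariance). So it suffices that `P → 0`, and
each entry of `N⁻¹` is at most `1 / r` in absolute value when `r |x|² ≤ xᵀ N x` for all `x`.

Invertibility of the Schur complement `A - B P Bᵀ` comes from
`det [[A, B], [Bᵀ, D + Σ_E]] = det (D + Σ_E) · det (A - B P Bᵀ)`, the block matrix staying
positive definite when `Σ_E ⪰ 0` is added to its lower right block.
-/

open Matrix Filter Topology

namespace Matrix

section Blocks

variable {m n R : Type*} [Fintype m] [Fintype n] [DecidableEq n]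

theorem posSemidef_fromBlocks_zero_zero_zero [CommRing R] [PartialOrder R] [StarRing R]
    [StarOrderedRing R] {S : Matrix n n R} (hS : S.PosSemidef) :
    (fromBlocks (0 : Matrix m m R) 0 0 S).PosSemidef := by
  have := hS.conjTranspose_mul_mul_same (fromCols (0 : Matrix n m R) (1 : Matrix n n R))
  rwa [conjTranspose_fromCols_eq_fromRows_conjTranspose, fromRows_mul, fromRows_mul_fromCols,
    conjTranspose_zero, conjTranspose_one, Matrix.zero_mul, Matrix.zero_mul, Matrix.one_mul,
    Matrix.mul_zero, Matrix.mul_one, Matrix.mul_one] at this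

theorem PosDef.fromBlocks_add_posSemidef₂₂ [CommRing R] [PartialOrder R] [StarRing R]
    [StarOrderedRing R] {A : Matrix m m R} {B : Matrix m n R} {C : Matrix n m R}
    {D S : Matrix n n R} (hM : (fromBlocks A B C D).PosDef) (hS : S.PosSemidef) :
    (fromBlocks A B C (D + S)).PosDef := by
  have h := hM.add_posSemidef (posSemidef_fromBlocks_zero_zero_zero (m := m) hS)
  rwa [fromBlocks_add, add_zero, add_zero, add_zero] at h

theorem isUnit_sub_mul_inv_mul_of_isUnit_fromBlocks [DecidableEq m] [CommRing R]
    {A : Matrix m m R} {B : Matrix m n R} {C : Matrix n m R} {D : Matrix n n R}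
    (hD : IsUnit D) (hM : IsUnit (fromBlocks A B C D)) : IsUnit (A - B * D⁻¹ * C) := by
  have := hD.invertible
  rw [isUnit_iff_isUnit_det, det_fromBlocks₂₂, invOf_eq_nonsing_inv] at hM
  exact (isUnit_iff_isUnit_det _).mpr (isUnit_of_mul_isUnit_right hM)

end Blocks

section Rayleigh

variable {n : Type*} [Fintype n] [DecidableEq n]

theorem isUnit_of_forall_mul_dotProduct_le {N : Matrix n n ℝ} {r : ℝ} (hr : 0 < r)
    (h : ∀ x, r * (x ⬝ᵥ x) ≤ x ⬝ᵥ N *ᵥ x) : IsUnit N := by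
  rw [isUnit_iff_isUnit_det, isUnit_iff_ne_zero, Ne, ← exists_mulVec_eq_zero_iff]
  rintro ⟨x, hx, hNx⟩
  have := h x
  rw [hNx, dotProduct_zero] at this
  have hx0 : 0 ≤ x ⬝ᵥ x := by simpa using dotProduct_star_self_nonneg x
  exact hx (dotProduct_self_eq_zero.mp
    (le_antisymm (nonpos_of_mul_nonpos_right this hr) hx0))

theorem abs_inv_apply_le_of_forall_mul_dotProduct_le {N : Matrix n n ℝ} {r : ℝ} (hr : 0 < r)
    (h : ∀ x, r * (x ⬝ᵥ x) ≤ x ⬝ᵥ N *ᵥ x) (i j : n) : |N⁻¹ i j| ≤ r⁻¹ := by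
  -- `u` is the `j`-th column of `N⁻¹`, and `r |u|² ≤ uᵀ N u = u j ≤ |u|`.
  set u := N⁻¹ *ᵥ Pi.single j 1
  have hNu : N *ᵥ u = Pi.single j 1 := by
    rw [mulVec_mulVec, mul_nonsing_inv _ ((isUnit_iff_isUnit_det N).mp
      (isUnit_of_forall_mul_dotProduct_le hr h)), one_mulVec]
  have hu : N⁻¹ i j = u i := by simp [u]
  have hsq : ∀ k, u k ^ 2 ≤ u ⬝ᵥ u := fun k => by
    simpa [dotProduct, sq] using
      Finset.single_le_sum (fun l _ => mul_self_nonneg (u l)) (Finset.mem_univ k)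
  have hj : r * (u ⬝ᵥ u) ≤ u j := by simpa [hNu] using h u
  have hs0 : 0 ≤ u ⬝ᵥ u := by simpa using dotProduct_star_self_nonneg u
  have hrs : (r * (u ⬝ᵥ u)) ^ 2 ≤ u ⬝ᵥ u :=
    (pow_le_pow_left₀ (by positivity) hj 2).trans (hsq j)
  have hs : r ^ 2 * (u ⬝ᵥ u) ≤ 1 := by nlinarith
  rw [hu, ← one_div, le_div_iff₀ hr]
  nlinarith [abs_nonneg (u i), sq_abs (u i), hsq i]

theorem tendsto_inv_nhds_zero_of_forall_mul_dotProduct_le {ι : Type*} {l : Filter ι}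
    {N : ι → Matrix n n ℝ} (h : ∀ r : ℝ, ∀ᶠ k in l, ∀ x, r * (x ⬝ᵥ x) ≤ x ⬝ᵥ N k *ᵥ x) :
    Tendsto (fun k => (N k)⁻¹) l (𝓝 0) := by
  refine tendsto_pi_nhds.mpr fun i => tendsto_pi_nhds.mpr fun j => ?_
  refine Metric.tendsto_nhds.mpr fun ε hε => ?_
  filter_upwards [h (2 / ε)] with k hk
  calc dist ((N k)⁻¹ i j) 0 = |(N k)⁻¹ i j| := Real.dist_0_eq_abs _
    _ ≤ (2 / ε)⁻¹ := abs_inv_apply_le_of_forall_mul_dotProduct_le (by positivity) hk i j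
    _ < ε := by rw [inv_div]; linarith

end Rayleigh

end Matrix

section Bias

variable {m n : Type*} [Fintype m] [Fintype n] [DecidableEq m]

/-- The measurement error bias as a function of `P = (D + Σ_E)⁻¹`. -/
noncomputable def measurementErrorBias (A : Matrix m m ℝ) (B : Matrix m n ℝ)
    (D P : Matrix n n ℝ) (β : n → ℝ) : m → ℝ :=
  ((A - B * P * Bᵀ)⁻¹ * (B - B * P * D)) *ᵥ β

theorem tendsto_measurementErrorBias_nhds_zero {A : Matrix m m ℝ} (hA : IsUnit A)
    (B : Matrix m n ℝ) (D : Matrix n n ℝ) (β : n → ℝ) :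
    Tendsto (measurementErrorBias A B D · β) (𝓝 0) (𝓝 ((A⁻¹ * B) *ᵥ β)) := by
  have hinv : ContinuousAt Inv.inv A := continuousAt_matrix_inv A <| by
    obtain ⟨u, hu⟩ := (isUnit_iff_isUnit_det A).mp hA
    exact hu ▸ NormedRing.inverse_continuousAt u
  have hschur : ContinuousAt (fun P : Matrix n n ℝ => (A - B * P * Bᵀ)⁻¹) 0 :=
    hinv.comp_of_eq (by fun_prop) (by simp)
  have hbias : ContinuousAt (measurementErrorBias A B D · β) 0 := by
    unfold measurementErrorBias
    fun_prop
  simpa [measurementErrorBias] using hbias.tendsto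

end Bias

/-- Omitted variable bias as the limit of classical measurement
error bias: if the block covariance matrix `[[A, B], [Bᵀ, D]]` is symmetric
positive definite, then for every symmetric positive semidefinite `Σ_E` the
matrices `D + Σ_E` and `A - B (D + Σ_E)⁻¹ Bᵀ` are invertible, and for every
sequence of symmetric positive semidefinite matrices whose smallest eigenvalues
tend to `+∞` (expressed via Rayleigh quotients), the measurement error bias
vectors converge to the omitted variable bias vector `A⁻¹ B βX`. -/
theorem meb_tendsto_ovb_as_error_grows
    (p d : ℕ) (A : Matrix (Fin p) (Fin p) ℝ)
    (B : Matrix (Fin p) (Fin d) ℝ) (D : Matrix (Fin d) (Fin d) ℝ)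
    (hS : (Matrix.fromBlocks A B Bᵀ D).PosDef) (βX : Fin d → ℝ) :
    (∀ SE : Matrix (Fin d) (Fin d) ℝ, SE.PosSemidef →
      IsUnit (D + SE) ∧ IsUnit (A - B * (D + SE)⁻¹ * Bᵀ)) ∧
    ∀ SE : ℕ → Matrix (Fin d) (Fin d) ℝ,
      (∀ n, (SE n).PosSemidef) →
      (∀ r : ℝ, ∀ᶠ n in Filter.atTop,
        ∀ x : Fin d → ℝ, r * (x ⬝ᵥ x) ≤ x ⬝ᵥ (SE n).mulVec x) →
      Filter.Tendsto
        (fun n => ((A - B * (D + SE n)⁻¹ * Bᵀ)⁻¹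
          * (B - B * (D + SE n)⁻¹ * D)).mulVec βX)
        Filter.atTop (nhds ((A⁻¹ * B).mulVec βX)) := by
  have hA : A.PosDef := hS.submatrix Sum.inl_injective
  have hD : D.PosDef := hS.submatrix Sum.inr_injective
  refine ⟨fun SE hSE => ?_, fun SE _ hSE => ?_⟩
  · have hDSE : IsUnit (D + SE) := (hD.add_posSemidef hSE).isUnit
    exact ⟨hDSE, isUnit_sub_mul_inv_mul_of_isUnit_fromBlocks hDSE
      (hS.fromBlocks_add_posSemidef₂₂ hSE).isUnit⟩
  · have hDSE : ∀ r : ℝ, ∀ᶠ n in atTop, ∀ x, r * (x ⬝ᵥ x) ≤ x ⬝ᵥ (D + SE n) *ᵥ x :=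
      fun r => (hSE r).mono fun n hn x => by
        have := hD.posSemidef.dotProduct_mulVec_nonneg x
        rw [add_mulVec, dotProduct_add]
        simp only [star_trivial] at this
        linarith [hn x]
    exact (tendsto_measurementErrorBias_nhds_zero hA.isUnit B D βX).comp
      (tendsto_inv_nhds_zero_of_forall_mul_dotProduct_le hDSE)
end

section
/- Let p = 1, d = 2, and set A = 1 (a 1×1 matrix), B = (0.2, 0.1) (a 1×2 matrix), D the 2×2 matrix with diagonal entries 1 and off-diagonal entries 0.15, Σ_E the 2×2 matrix with rows (0.7, 0.05) and (0.05, 0.4), and β_X = (1, −2). Then the omitted variable bias A^{-1} B β_X equals 0, while the measurement error bias (A − B (D + Σ_E)^{-1} B^T)^{-1} (B − B (D + Σ_E)^{-1} D) β_X is strictly positive (in particular nonzero). -/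
/-!
Since `B βX = 0`, the omitted variable bias vanishes. The measurement error bias does not: writing
`B = B (D + Σ_E)⁻¹ (D + Σ_E)` turns its numerator `(B - B (D + Σ_E)⁻¹ D) βX` into
`B (D + Σ_E)⁻¹ Σ_E βX`, and `Σ_E` rotates `βX` out of the kernel of `B (D + Σ_E)⁻¹`.
-/

open Matrix

theorem Matrix.sub_mul_inv_add_mul_eq_mul_inv_add_mul {m n R : Type*} [Fintype n] [DecidableEq n]
    [CommRing R] (B : Matrix m n R) (D E : Matrix n n R) (h : IsUnit (D + E).det) :
    B - B * (D + E)⁻¹ * D = B * (D + E)⁻¹ * E := by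
  rw [sub_eq_iff_eq_add', ← Matrix.mul_add, Matrix.mul_assoc, nonsing_inv_mul _ h, Matrix.mul_one]

theorem Matrix.inv_mul_mulVec_apply_of_subsingleton {ι n K : Type*} [Fintype ι] [DecidableEq ι]
    [Subsingleton ι] [Fintype n] [Field K] (M : Matrix ι ι K) (N : Matrix ι n K) (v : n → K)
    (i : ι) : ((M⁻¹ * N) *ᵥ v) i = (M i i)⁻¹ * (N *ᵥ v) i := by
  rw [← mulVec_mulVec, inv_subsingleton, mulVec_diagonal, Ring.inverse_eq_inv]

theorem inv_covariance_example :
    (!![1, 0.15; 0.15, 1] + !![0.7, 0.05; 0.05, 0.4] : Matrix (Fin 2) (Fin 2) ℝ)⁻¹ =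
      !![70 / 117, -10 / 117; -10 / 117, 85 / 117] := by
  refine inv_eq_left_inv ?_
  ext i j
  fin_cases i <;> fin_cases j <;> norm_num [Matrix.mul_apply, Fin.sum_univ_two]

theorem isUnit_det_covariance_example :
    IsUnit (!![1, 0.15; 0.15, 1] + !![0.7, 0.05; 0.05, 0.4] : Matrix (Fin 2) (Fin 2) ℝ).det := by
  norm_num [det_fin_two]

/-- Explicit example with `p = 1`, `d = 2` showing that under
classical measurement error the omitted variable bias `A⁻¹ B βX` can be zero
while the measurement error bias
`(A - B (D + Σ_E)⁻¹ Bᵀ)⁻¹ (B - B (D + Σ_E)⁻¹ D) βX` is strictly positive. -/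
theorem meb_can_exceed_ovb_example
    (A : Matrix (Fin 1) (Fin 1) ℝ) (B : Matrix (Fin 1) (Fin 2) ℝ)
    (D SE : Matrix (Fin 2) (Fin 2) ℝ) (βX : Fin 2 → ℝ)
    (hA : A = 1) (hB : B = !![0.2, 0.1])
    (hD : D = !![1, 0.15; 0.15, 1])
    (hSE : SE = !![0.7, 0.05; 0.05, 0.4])
    (hβX : βX = ![1, -2]) :
    (A⁻¹ * B).mulVec βX = 0 ∧
    0 < ((A - B * (D + SE)⁻¹ * Bᵀ)⁻¹
      * (B - B * (D + SE)⁻¹ * D)).mulVec βX 0 := by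
  subst hA hB hD hSE hβX
  refine ⟨?_, ?_⟩
  · ext i
    fin_cases i
    norm_num [mulVec, dotProduct, Fin.sum_univ_two]
  · -- `35 / 36 = A - B (D + Σ_E)⁻¹ Bᵀ` and `1 / 40 = B (D + Σ_E)⁻¹ Σ_E βX`
    calc (0 : ℝ) < (35 / 36)⁻¹ * (1 / 40) := by norm_num
      _ = _ := by
        rw [sub_mul_inv_add_mul_eq_mul_inv_add_mul _ _ _ isUnit_det_covariance_example,
          inv_mul_mulVec_apply_of_subsingleton, inv_covariance_example]
        norm_num [mulVec, vecMul, dotProduct, Matrix.mul_apply, Fin.sum_univ_two]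
end

section
/- Let p = d = 1 and let A, B, D, κ, β_X be real numbers with A > 0 and A·D − B² > 0. Define C = B + κA, F = D + κB, and G = D + 2κB + κ²A. Then G > 0, A − C²/G > 0, and the measurement error bias ((B − C·F/G) / (A − C²/G)) · β_X equals −κ·β_X. In particular, if B = 0 the omitted variable bias A^{-1}·B·β_X is zero, while the measurement error bias equals −κ·β_X and can be made arbitrarily large in magnitude by choice of κ. -/
/-!
Passing from `(Z, X)` to `(Z, W)` with `W = X + κZ` is a unimodular change of variables, so the
covariance matrix of `(Z, W)` has the same determinant `AD - B²` as that of `(Z, X)`. Hence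
`A G = (AD - B²) + C² > 0`, and the Schur complement `A - C²/G` equals `(AD - B²)/G > 0`.
The numerator of the bias is `(BG - CF)/G = -κ (AD - B²)/G`, so the bias is `-κ βX`.
-/

section Proxy

variable {K : Type*} (A B D κ : K)

theorem proxy_cov_det [CommRing K] :
    A * (D + 2 * κ * B + κ ^ 2 * A) - (B + κ * A) ^ 2 = A * D - B ^ 2 := by
  ring

theorem proxy_cross_cov_det [CommRing K] :
    B * (D + 2 * κ * B + κ ^ 2 * A) - (B + κ * A) * (D + κ * B) = -κ * (A * D - B ^ 2) := by
  ring

variable {A B D}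

theorem proxy_var_pos [Field K] [LinearOrder K] [IsStrictOrderedRing K]
    (hA : 0 < A) (hAD : 0 < A * D - B ^ 2) : 0 < D + 2 * κ * B + κ ^ 2 * A := by
  have hAG : 0 < A * (D + 2 * κ * B + κ ^ 2 * A) := by
    rw [eq_add_of_sub_eq (proxy_cov_det A B D κ)]
    exact add_pos_of_pos_of_nonneg hAD (sq_nonneg _)
  exact pos_of_mul_pos_right hAG hA.le

end Proxy

/-- Counterexample with `p = d = 1` and proxy `W = X + κZ`:
with `C = B + κA`, `F = D + κB`, `G = D + 2κB + κ²A`, one has `G > 0`,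
`A - C²/G > 0`, and the measurement error bias `((B - CF/G)/(A - C²/G)) βX`
equals `-κ βX`; in particular, if `B = 0` the omitted variable bias
`A⁻¹ B βX` is zero. -/
theorem meb_counterexample_scalar
    (A B D κ βX : ℝ) (hA : 0 < A) (hAD : 0 < A * D - B ^ 2)
    (C F G : ℝ) (hC : C = B + κ * A) (hF : F = D + κ * B)
    (hG : G = D + 2 * κ * B + κ ^ 2 * A) :
    0 < G ∧ 0 < A - C ^ 2 / G ∧
    (B - C * F / G) / (A - C ^ 2 / G) * βX = -κ * βX ∧
    (B = 0 → A⁻¹ * B * βX = 0) := by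
  have hGpos : 0 < G := hG ▸ proxy_var_pos κ hA hAD
  have hdet : A * G - C ^ 2 = A * D - B ^ 2 := by rw [hC, hG]; exact proxy_cov_det A B D κ
  have hcross : B * G - C * F = -κ * (A * D - B ^ 2) := by
    rw [hC, hF, hG]; exact proxy_cross_cov_det A B D κ
  have hSchur : A - C ^ 2 / G = (A * D - B ^ 2) / G := by rw [sub_div' hGpos.ne', hdet]
  have hSchur_pos : 0 < A - C ^ 2 / G := hSchur ▸ div_pos hAD hGpos
  refine ⟨hGpos, hSchur_pos, ?_, fun hB => by simp [hB]⟩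
  rw [sub_div' hGpos.ne', hcross, hSchur, mul_div_assoc,
    mul_div_cancel_right₀ _ (div_pos hAD hGpos).ne']
end

section
/- Let (Ω, F, P) be a probability space, and let Y, Z^(1),…,Z^(p), X^(1),…,X^(d), W^(1),…,W^(d) be square-integrable real random variables. Define the (p+d)×(p+d) covariance matrix Σ_M of the vector (Z, W) and assume it is invertible. Let B be the p×d matrix with B_{kj} = Cov(Z^(k), X^(j)), C the p×d matrix with C_{kj} = Cov(Z^(k), W^(j)), F the d×d matrix with F_{jl} = Cov(X^(j), W^(l)), and G the d×d matrix with G_{jl} = Cov(W^(j), W^(l)). Suppose α ∈ R and β = (β_Z, β_X) ∈ R^{p+d} are such that ε := Y − α − Σ_k β_{Z,k} Z^(k) − Σ_j β_{X,j} X^(j) satisfies Cov(Z^(k), ε) = 0 for all k, Cov(X^(j), ε) = 0 for all j, and additionally Cov(W^(j) − X^(j), ε) = 0 for all j. Suppose α'' ∈ R and δ = (δ_Z, δ_W) ∈ R^{p+d} are such that Y − α'' − Σ_k δ_{Z,k} Z^(k) − Σ_j δ_{W,j} W^(j) is uncorrelated with every Z^(k) and every W^(j). Then δ − β = Σ_M^{-1}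 Σ_{M,E} β, where Σ_{M,E} is the (p+d)×(p+d) block matrix with upper-left p×p block zero, upper-right block B − C, lower-left block zero, and lower-right block F^T − G. -/
/-!
Both coefficient vectors solve a linear system with the same right-hand side `Cov((Z, W), Y)`:
for `δ` this is the normal equations `Σ_M δ = Cov((Z, W), Y)`, and for `β` the normal equations
of the true regression together with `Cov(W - X, ε) = 0` give `Cov((Z, W), Y) = Cov((Z, W), (Z, X)) β`.
Since `Cov((Z, W), (Z, X)) = Σ_M + Σ_{M,E}`, subtracting yields `Σ_M (δ - β) = Σ_{M,E} β`.
-/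

open MeasureTheory Matrix

/-- Covariance of two real random variables under the measure `P`. -/
noncomputable def cov {Ω : Type*} [MeasurableSpace Ω] (P : Measure Ω)
    (f g : Ω → ℝ) : ℝ :=
  ∫ ω, (f ω - ∫ x, f x ∂P) * (g ω - ∫ x, g x ∂P) ∂P

theorem Matrix.eq_inv_mul_mulVec_of_mulVec_eq {n m α : Type*} [Fintype n] [DecidableEq n]
    [Fintype m] [CommRing α] {M : Matrix n n α} {E : Matrix n m α} {v : n → α} {w : m → α}
    (hM : IsUnit M) (h : M *ᵥ v = E *ᵥ w) : v = (M⁻¹ * E) *ᵥ w := by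
  have := hM.invertible
  rw [← mulVec_mulVec, ← h, inv_mulVec_eq_vec rfl]

namespace ProbabilityTheory

variable {Ω : Type*} [MeasurableSpace Ω] {P : Measure Ω}

theorem cov_eq_covariance (f g : Ω → ℝ) : cov P f g = cov[f, g; P] := rfl

noncomputable def covMatrix {σ ι : Type*} (P : Measure Ω) (S : σ → Ω → ℝ) (U : ι → Ω → ℝ) :
    Matrix σ ι ℝ :=
  Matrix.of fun i j => cov P (S i) (U j)

theorem covMatrix_transpose {σ ι : Type*} (S : σ → Ω → ℝ) (U : ι → Ω → ℝ) :
    (covMatrix P S U)ᵀ = covMatrix P U S := by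
  ext i j
  exact covariance_comm _ _

theorem covMatrix_sumElim {σ τ ι κ : Type*} (S : σ → Ω → ℝ) (T : τ → Ω → ℝ)
    (U : ι → Ω → ℝ) (V : κ → Ω → ℝ) :
    covMatrix P (Sum.elim S T) (Sum.elim U V)
      = fromBlocks (covMatrix P S U) (covMatrix P S V) (covMatrix P T U) (covMatrix P T V) := by
  ext (i | i) (j | j) <;> rfl

omit [MeasurableSpace Ω] in
theorem residual_sumElim {ι κ : Type*} [Fintype ι] [Fintype κ] (Y : Ω → ℝ) (a : ℝ)
    (b : ι → ℝ) (c : κ → ℝ) (U : ι → Ω → ℝ) (V : κ → Ω → ℝ) :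
    (fun ω => Y ω - a - ∑ i, Sum.elim b c i * Sum.elim U V i ω)
      = fun ω => Y ω - a - ∑ i, b i * U i ω - ∑ j, c j * V j ω := by
  ext ω
  simp only [Fintype.sum_sum_type, Sum.elim_inl, Sum.elim_inr]
  ring

theorem memLp_residual [IsFiniteMeasure P] {ι : Type*} [Fintype ι] {Y : Ω → ℝ}
    {U : ι → Ω → ℝ} (hY : MemLp Y 2 P) (hU : ∀ i, MemLp (U i) 2 P) (a : ℝ) (b : ι → ℝ) :
    MemLp (fun ω => Y ω - a - ∑ i, b i * U i ω) 2 P :=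
  (hY.sub (memLp_const a)).sub (memLp_finsetSum _ fun i _ => (hU i).const_mul (b i))

theorem cov_residual [IsProbabilityMeasure P] {ι : Type*} [Fintype ι] {f Y : Ω → ℝ}
    {U : ι → Ω → ℝ} (hf : MemLp f 2 P) (hY : MemLp Y 2 P) (hU : ∀ i, MemLp (U i) 2 P)
    (a : ℝ) (b : ι → ℝ) :
    cov P f (fun ω => Y ω - a - ∑ i, b i * U i ω) = cov P f Y - ∑ i, cov P f (U i) * b i := by
  have hbU : ∀ i, MemLp (fun ω => b i * U i ω) 2 P := fun i => (hU i).const_mul (b i)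
  simp only [cov_eq_covariance]
  rw [covariance_fun_sub_right (Y := fun ω => Y ω - a) hf (hY.sub (memLp_const a))
      (memLp_finsetSum _ fun i _ => hbU i),
    covariance_fun_sub_right hf hY (memLp_const a), covariance_const_right,
    covariance_fun_sum_right hbU hf]
  simp only [covariance_const_mul_right, sub_zero]
  simp only [mul_comm (b _)]

theorem covMatrix_mulVec_eq_of_cov_residual_eq_zero [IsProbabilityMeasure P]
    {σ ι : Type*} [Fintype ι] {Y : Ω → ℝ} {S : σ → Ω → ℝ} {U : ι → Ω → ℝ}
    (hY : MemLp Y 2 P) (hS : ∀ s, MemLp (S s) 2 P) (hU : ∀ i, MemLp (U i) 2 P)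
    {a : ℝ} {b : ι → ℝ} (h : ∀ s, cov P (S s) (fun ω => Y ω - a - ∑ i, b i * U i ω) = 0) :
    covMatrix P S U *ᵥ b = fun s => cov P (S s) Y := by
  funext s
  have := h s
  rw [cov_residual (hS s) hY hU] at this
  simp only [mulVec, dotProduct, covMatrix, of_apply]
  linarith

end ProbabilityTheory

open ProbabilityTheory in
/-- Population measurement error bias formula: if `(α, β)`
satisfy the normal equations for regressing `Y` on the true covariates `(Z, X)`,
the residual `ε` is additionally uncorrelated with the measurement errors
`W - X`, and `(α'', δ)` satisfy the normal equations for regressing `Y` on the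
observed covariates `(Z, W)`, then `δ - β = Σ_M⁻¹ Σ_{M,E} β`. -/
theorem population_meb_formula
    {Ω : Type*} [MeasurableSpace Ω] (P : Measure Ω) [IsProbabilityMeasure P]
    (p d : ℕ) (Y : Ω → ℝ) (Z : Fin p → Ω → ℝ)
    (X W : Fin d → Ω → ℝ)
    (hY : MemLp Y 2 P) (hZ : ∀ k, MemLp (Z k) 2 P)
    (hX : ∀ j, MemLp (X j) 2 P) (hW : ∀ j, MemLp (W j) 2 P)
    (A : Matrix (Fin p) (Fin p) ℝ)
    (hA : A = Matrix.of fun k l => cov P (Z k) (Z l))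
    (B : Matrix (Fin p) (Fin d) ℝ)
    (hB : B = Matrix.of fun k j => cov P (Z k) (X j))
    (C : Matrix (Fin p) (Fin d) ℝ)
    (hC : C = Matrix.of fun k j => cov P (Z k) (W j))
    (F : Matrix (Fin d) (Fin d) ℝ)
    (hF : F = Matrix.of fun j l => cov P (X j) (W l))
    (G : Matrix (Fin d) (Fin d) ℝ)
    (hG : G = Matrix.of fun j l => cov P (W j) (W l))
    (hSM : IsUnit (Matrix.fromBlocks A C Cᵀ G))
    (α : ℝ) (βZ : Fin p → ℝ) (βX : Fin d → ℝ)
    (hεZ : ∀ k, cov P (Z k)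
      (fun ω => Y ω - α - ∑ k', βZ k' * Z k' ω - ∑ j, βX j * X j ω) = 0)
    (hεX : ∀ j, cov P (X j)
      (fun ω => Y ω - α - ∑ k', βZ k' * Z k' ω - ∑ j', βX j' * X j' ω) = 0)
    (hεE : ∀ j, cov P (fun ω => W j ω - X j ω)
      (fun ω => Y ω - α - ∑ k', βZ k' * Z k' ω - ∑ j', βX j' * X j' ω) = 0)
    (α'' : ℝ) (δZ : Fin p → ℝ) (δW : Fin d → ℝ)
    (hδZ : ∀ k, cov P (Z k)
      (fun ω => Y ω - α'' - ∑ k', δZ k' * Z k' ω - ∑ j, δW j * W j ω) = 0)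
    (hδW : ∀ j, cov P (W j)
      (fun ω => Y ω - α'' - ∑ k', δZ k' * Z k' ω - ∑ j', δW j' * W j' ω) = 0) :
    Sum.elim δZ δW - Sum.elim βZ βX
      = ((Matrix.fromBlocks A C Cᵀ G)⁻¹
          * Matrix.fromBlocks (0 : Matrix (Fin p) (Fin p) ℝ) (B - C)
              (0 : Matrix (Fin d) (Fin p) ℝ) (Fᵀ - G)).mulVec
          (Sum.elim βZ βX) := by
  have hZW : ∀ s, MemLp (Sum.elim Z W s) 2 P := Sum.forall.2 ⟨hZ, hW⟩
  have hZX : ∀ s, MemLp (Sum.elim Z X s) 2 P := Sum.forall.2 ⟨hZ, hX⟩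
  rw [← residual_sumElim] at hεZ hεX hεE hδZ hδW
  have hεW : ∀ j, cov P (W j)
      (fun ω => Y ω - α - ∑ i, Sum.elim βZ βX i * Sum.elim Z X i ω) = 0 := fun j => by
    have := hεE j
    rwa [cov_eq_covariance, covariance_fun_sub_left (hW j) (hX j) (memLp_residual hY hZX _ _),
      ← cov_eq_covariance, ← cov_eq_covariance, hεX j, sub_zero] at this
  have hβ := covMatrix_mulVec_eq_of_cov_residual_eq_zero hY hZW hZX (Sum.forall.2 ⟨hεZ, hεW⟩)
  have hδ := covMatrix_mulVec_eq_of_cov_residual_eq_zero hY hZW hZW (Sum.forall.2 ⟨hδZ, hδW⟩)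
  have hM : fromBlocks A C Cᵀ G = covMatrix P (Sum.elim Z W) (Sum.elim Z W) := by
    rw [covMatrix_sumElim, ← covMatrix_transpose Z W]
    subst hA hC hG
    rfl
  have hME : fromBlocks A C Cᵀ G + fromBlocks 0 (B - C) 0 (Fᵀ - G)
      = covMatrix P (Sum.elim Z W) (Sum.elim Z X) := by
    rw [fromBlocks_add, add_zero, add_zero, add_sub_cancel, add_sub_cancel, covMatrix_sumElim,
      ← covMatrix_transpose Z W, ← covMatrix_transpose X W]
    subst hA hB hC hF
    rfl
  refine Matrix.eq_inv_mul_mulVec_of_mulVec_eq hSM ?_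
  rw [mulVec_sub, hM, hδ, ← hβ, ← hME, add_mulVec, hM, add_sub_cancel_left]
end
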